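/- arXiv:1707.07544 — 4 statements merged into one kernel-verified Lean document; each statement's English description precedes it below -/
import Mathlib

section
/- For every complex number z with 0 ≤ Re(z) ≤ 1, there exists a constant c > 0 (independent of z) such that Re(z/(1+z)²) ≥ c · (Re(z) + |Im(z)|²)/(1+|Im(z)|)⁴. -/
open Complex

theorem stmt0 :
    ∃ c : ℝ, 0 < c ∧ ∀ z : ℂ, 0 ≤ z.re → z.re ≤ 1 →
      c * (z.re + |z.im| ^ 2) / (1 + |z.im|) ^ 4 ≤ (z / (1 + z) ^ 2).re := by
  refine ⟨1/16, by norm_num, ?_⟩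
  intro z hx0 hx1
  set x := z.re with hxdef
  set y := z.im with hydef
  have hN : (0:ℝ) < ((1+x)^2 + y^2)^2 := by positivity
  have hre : (z / (1 + z) ^ 2).re =
      (x * ((1+x)^2 - y^2) + y * (2*(1+x)*y)) / (((1+x)^2 + y^2)^2) := by
    rw [Complex.div_re]
    have h1 : ((1+z)^2).re = (1+x)^2 - y^2 := by
      simp [pow_two, Complex.mul_re, Complex.add_re, Complex.add_im]; rfl
    have h2 : ((1+z)^2).im = 2*(1+x)*y := by
      simp [pow_two, Complex.mul_im, Complex.add_re, Complex.add_im]; ring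
    have h3 : Complex.normSq ((1+z)^2) = ((1+x)^2 + y^2)^2 := by
      rw [Complex.normSq_apply, h1, h2]; ring
    rw [h1, h2, h3, ← add_div]
  rw [hre]
  set a := |y| with hadef
  have ha0 : 0 ≤ a := abs_nonneg y
  have ha2 : a^2 = y^2 := sq_abs y
  have hD : (0:ℝ) < (1+a)^4 := by positivity
  rw [div_le_div_iff₀ hD hN]
  have h4 : (1+x)^2 + y^2 ≤ 4*(1+a)^2 := by nlinarith
  have h5 : ((1+x)^2 + y^2)^2 ≤ 16*(1+a)^4 := by nlinarith [sq_nonneg ((1+x)^2+y^2)]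
  nlinarith [mul_nonneg (add_nonneg hx0 (sq_nonneg y)) (sub_nonneg.2 h5),
    mul_nonneg (mul_nonneg hx0 hx0) (le_of_lt hD), sq_nonneg y,
    mul_nonneg (mul_nonneg hx0 hx0) (sq_nonneg y),
    mul_nonneg (sq_nonneg y) (le_of_lt hD),
    mul_nonneg (mul_nonneg hx0 (sq_nonneg y)) (le_of_lt hD)]
end

section
/- For every complex number z with 0 ≤ Re(z) ≤ 1, there exists a constant C > 0 (independent of z) such that |Im(z/(1+z)²)| ≤ C · (Re(z) + |Im(z)| + |Im(z)|²)/(1+|Im(z)|)³. -/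
open Complex

theorem stmt1 :
    ∃ C : ℝ, 0 < C ∧ ∀ z : ℂ, 0 ≤ z.re → z.re ≤ 1 →
      |(z / (1 + z) ^ 2).im| ≤ C * (z.re + |z.im| + |z.im| ^ 2) / (1 + |z.im|) ^ 3 := by
  refine ⟨2, by norm_num, fun z hx0 hx1 => ?_⟩
  set x := z.re with hx
  set y := z.im with hy
  have hD : (0:ℝ) < (1+x)^2 + y^2 := by nlinarith [sq_nonneg y]
  have him : (z / (1+z)^2).im = y * (1 - x^2 - y^2) / (((1+x)^2 + y^2)^2) := by
    rw [Complex.div_im]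
    have h1 : (((1:ℂ)+z)^2).re = (1+x)^2 - y^2 := by
      simp [pow_two, Complex.mul_re, Complex.add_re, Complex.add_im]; try ring
    have h2 : (((1:ℂ)+z)^2).im = 2*(1+x)*y := by
      simp [pow_two, Complex.mul_im, Complex.add_re, Complex.add_im]; try ring
    have h3 : Complex.normSq (((1:ℂ)+z)^2) = ((1+x)^2+y^2)^2 := by
      rw [Complex.normSq_apply, h1, h2]; ring
    rw [h1, h2, h3]
    field_simp
    ring
  rw [him, abs_div, abs_of_pos (by positivity : (0:ℝ) < ((1+x)^2+y^2)^2), abs_mul]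
  rw [div_le_div_iff₀ (by positivity) (by positivity)]
  have ht : (0:ℝ) ≤ |y| := abs_nonneg y
  have hy2 : |y|^2 = y^2 := sq_abs y
  have habs : |1 - x^2 - y^2| ≤ 1 + y^2 := by
    rw [abs_le]; constructor <;> nlinarith
  have hyy : y^2 ≤ |y|^2 := by rw [hy2]
  set t := |y| with hty
  have e1 : (1+y^2)^2 ≤ ((1+x)^2 + y^2)^2 := by nlinarith [sq_nonneg y]
  have e2 : t*(1+t^2)*(1+t)^3 ≤ 2*(t+t^2)*(1+t^2)^2 := by
    nlinarith [sq_nonneg (1-t), mul_nonneg ht ht, mul_nonneg (mul_nonneg ht ht) ht,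
      mul_nonneg (mul_nonneg (mul_nonneg ht ht) ht) ht,
      mul_nonneg (mul_nonneg (mul_nonneg (mul_nonneg ht ht) ht) ht) ht,
      sq_nonneg (t*(1-t)), sq_nonneg (t^2*(1-t))]
  have e3 : t * |1 - x^2 - y^2| * (1+t)^3 ≤ t*(1+t^2)*(1+t)^3 := by
    have : t * |1 - x^2 - y^2| ≤ t*(1+t^2) := by
      rw [← hy2]; exact mul_le_mul_of_nonneg_left (by rw [hy2]; exact habs) ht
    exact mul_le_mul_of_nonneg_right this (by positivity)
  have e4 : 2*(t+t^2)*(1+t^2)^2 ≤ 2*(x+t+t^2)*((1+x)^2+y^2)^2 := by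
    have h5 : (0:ℝ) ≤ t + t^2 := by positivity
    have hq : t^4 = y^4 := by rw [show (4:ℕ)=2*2 from rfl, pow_mul, pow_mul, hy2]
    have h6 : 2*(t+t^2)*(1+t^2)^2 ≤ 2*(t+t^2)*((1+x)^2+y^2)^2 := by nlinarith [mul_le_mul_of_nonneg_left e1 h5, hq, hy2, mul_nonneg ht ht]
    have h7 : 2*(t+t^2)*((1+x)^2+y^2)^2 ≤ 2*(x+t+t^2)*((1+x)^2+y^2)^2 := by nlinarith [sq_nonneg ((1+x)^2+y^2)]
    linarith
  linarith
end

section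
/- Let z ∈ ℂ with 0 ≤ Re(z), let v ∈ ℝ³ with |v| > 0, and define M₂(z,v) = (π²/(4|v|))·((z/|v|)/(1+z/|v|)²)·P_v. If Re(z) ≥ 0 and Re(z)/|v| ≤ 1, then for every V ∈ ℂ³, ⟨V, Re(M₂(z,v)) V⟩ ≥ 0. -/
open Real

/-- Embedding of a real vector into `ℂ³`. -/
noncomputable def cEmbed (w : EuclideanSpace ℝ (Fin 3)) : EuclideanSpace ℂ (Fin 3) :=
  WithLp.toLp 2 (fun i => (w i : ℂ))

/-- Orthogonal projection of `V ∈ ℂ³` onto the complex line spanned by the real vector `v`. -/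
noncomputable def lineProj (v : EuclideanSpace ℝ (Fin 3)) (V : EuclideanSpace ℂ (Fin 3)) :
    EuclideanSpace ℂ (Fin 3) :=
  ((inner ℂ (cEmbed v) V : ℂ) / (‖v‖ : ℂ) ^ 2) • cEmbed v

lemma key_re (u : ℂ) (hu : 0 ≤ u.re) : 0 ≤ (u / (1 + u) ^ 2).re := by
  rw [Complex.div_re]
  have h1 : 0 ≤ Complex.normSq ((1 + u) ^ 2) := Complex.normSq_nonneg _
  have h2 : 0 ≤ u.re * ((1 + u) ^ 2).re + u.im * ((1 + u) ^ 2).im := by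
    simp only [pow_two, Complex.mul_re, Complex.mul_im, Complex.add_re, Complex.add_im,
      Complex.one_re, Complex.one_im]
    nlinarith [sq_nonneg u.im, sq_nonneg (1 + u.re), mul_nonneg hu (sq_nonneg u.im),
      mul_nonneg hu (sq_nonneg (1 + u.re))]
    
  calc (0:ℝ) ≤ (u.re * ((1 + u) ^ 2).re + u.im * ((1 + u) ^ 2).im) /
        Complex.normSq ((1 + u) ^ 2) := div_nonneg h2 h1
    _ = _ := by ring

theorem stmt17 (z : ℂ) (hz : 0 ≤ z.re) (v : EuclideanSpace ℝ (Fin 3)) (hv : 0 < ‖v‖)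
    (hz' : z.re / ‖v‖ ≤ 1) (V : EuclideanSpace ℂ (Fin 3)) :
    0 ≤ ((inner ℂ V ((((((π : ℂ) ^ 2 / (4 * ‖v‖)) *
        ((z / ‖v‖) / (1 + z / ‖v‖) ^ 2)).re : ℝ) : ℂ) • lineProj v V) : ℂ)).re := by
  set c : ℝ := (((π : ℂ) ^ 2 / (4 * ‖v‖)) * ((z / ‖v‖) / (1 + z / ‖v‖) ^ 2)).re with hc
  have hcn : 0 ≤ c := by
    have : ((π : ℂ) ^ 2 / (4 * (‖v‖:ℂ))) = ((π ^ 2 / (4 * ‖v‖) : ℝ) : ℂ) := by push_cast; ring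
    rw [hc, this, Complex.re_ofReal_mul]
    have hre : 0 ≤ (z / (‖v‖:ℂ)).re := by
      rw [Complex.div_ofReal_re]
      exact div_nonneg hz hv.le
    exact mul_nonneg (by positivity) (key_re _ hre)
  set t : ℂ := (inner ℂ (cEmbed v) V : ℂ) with ht
  have hinner : (inner ℂ V (lineProj v V) : ℂ) = (Complex.normSq t) / (‖v‖:ℂ) ^ 2 := by
    have h2 : (inner ℂ V (cEmbed v) : ℂ) = (starRingEnd ℂ) t := by
      rw [ht, inner_conj_symm]
    rw [lineProj, inner_smul_right, ← ht, h2, div_mul_eq_mul_div, Complex.mul_conj]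
  rw [inner_smul_right, hinner]
  have : ((c:ℂ) * ((Complex.normSq t) / (‖v‖:ℂ) ^ 2)) =
      ((c * (Complex.normSq t / ‖v‖ ^ 2) : ℝ) : ℂ) := by push_cast; ring
  rw [this, Complex.ofReal_re]
  exact mul_nonneg hcn (div_nonneg (Complex.normSq_nonneg t) (sq_nonneg _))
end

section
/- Let a ≥ 1/2, ε ∈ (0, 1/a], and consider the rational function Y(z) = δ/(1+|z|²) + Rε|z|/((1+ε|z|)(1+|z|²)) on the line Re(z) = a, with δ, R > 0. Let F : ℝ → ℝ be a Schwartz function. Then there is a constant C, independent of ε ∈ (0,1/a], δ, R > 0, such that for all ω ∈ ℝ: ∫_ℝ Y(a + i(ω-θ))·|F(θ)| dθ ≤ C·Y(a + iω). -/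
open Complex MeasureTheory

/-- The decay profile `Y_{R,ε,δ}`. -/
noncomputable def Yprof (R ε δ : ℝ) (z : ℂ) : ℝ :=
  δ / (1 + ‖z‖ ^ 2) +
    R * ε * ‖z‖ / ((1 + ε * ‖z‖) * (1 + ‖z‖ ^ 2))

lemma Yprof_nonneg {R ε δ : ℝ} (hδ : 0 ≤ δ) (hR : 0 ≤ R) (hε : 0 ≤ ε) (z : ℂ) :
    0 ≤ Yprof R ε δ z := by
  have h := norm_nonneg z
  unfold Yprof
  positivity

set_option maxHeartbeats 1000000 in
lemma Yprof_key (a : ℝ) (ha : 1 / 2 ≤ a) {δ R ε : ℝ} (hδ : 0 < δ) (hR : 0 < R)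
    (hε : 0 < ε) (ω θ : ℝ) :
    Yprof R ε δ (a + (ω - θ) * Complex.I) ≤
      (2 + 4 * |θ| + 2 * |θ| ^ 2 + 4 * |θ| ^ 3) * Yprof R ε δ (a + ω * Complex.I) := by
  set s1 := ‖(↑a + ↑(ω - θ) * I : ℂ)‖ with hs1def
  set s2 := ‖(↑a + ↑ω * I : ℂ)‖ with hs2def
  have hs1 : 0 ≤ s1 := norm_nonneg _
  have hs2 : 0 ≤ s2 := norm_nonneg _
  have hs2half : 1 / 2 ≤ s2 := by
    have h1 : |(↑a + ↑ω * I : ℂ).re| ≤ s2 := Complex.abs_re_le_norm _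
    simp only [Complex.add_re, Complex.ofReal_re, Complex.mul_re, Complex.ofReal_im,
      Complex.I_re, Complex.I_im, mul_zero, mul_one, zero_mul, sub_zero] at h1
    calc (1:ℝ)/2 ≤ a := ha
    _ ≤ |a| := le_abs_self a
    _ ≤ s2 := by simpa using h1
  have hsq1 : s1 ^ 2 = a ^ 2 + (ω - θ) ^ 2 := by
    rw [hs1def, Complex.norm_add_mul_I]
    exact Real.sq_sqrt (by positivity)
  have hsq2 : s2 ^ 2 = a ^ 2 + ω ^ 2 := by
    rw [hs2def, Complex.norm_add_mul_I]
    exact Real.sq_sqrt (by positivity)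
  have htri : s1 ≤ s2 + |θ| := by
    have hz : (↑a + ↑(ω - θ) * I : ℂ) = (↑a + ↑ω * I) + (-↑θ) * I := by
      push_cast; ring
    rw [hs1def, hz]
    refine (norm_add_le _ _).trans ?_
    have : ‖((-↑θ : ℂ) * I)‖ = |θ| := by
      simp [Complex.norm_real]
    rw [this]
  have hs12 : s1 ≤ (1 + 2 * |θ|) * s2 := by nlinarith [abs_nonneg θ]
  have d1 : (0:ℝ) < 1 + s1 ^ 2 := by positivity
  have d2 : (0:ℝ) < 1 + s2 ^ 2 := by positivity
  have e1 : (0:ℝ) < 1 + ε * s1 := by positivity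
  have e2 : (0:ℝ) < 1 + ε * s2 := by positivity
  -- Möbius-type comparison
  have h1 : ε * s1 / (1 + ε * s1) ≤ (1 + 2 * |θ|) * (ε * s2 / (1 + ε * s2)) := by
    rw [← mul_div_assoc, div_le_div_iff₀ e1 e2]
    have A : ε * s1 ≤ (1 + 2 * |θ|) * (ε * s2) := by nlinarith
    have B : 0 ≤ 2 * |θ| * (ε * s1 * (ε * s2)) := by positivity
    nlinarith [A, B]
  -- quadratic weight comparison
  have base : 1 + s2 ^ 2 ≤ 2 * (1 + |θ| ^ 2) * (1 + s1 ^ 2) := by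
    rw [hsq1, hsq2, _root_.sq_abs θ]
    nlinarith [sq_nonneg (ω - 2 * θ), mul_nonneg (sq_nonneg θ) (sq_nonneg (ω - θ)),
      mul_nonneg (sq_nonneg θ) (sq_nonneg a)]
  have h2 : 1 / (1 + s1 ^ 2) ≤ 2 * (1 + |θ| ^ 2) / (1 + s2 ^ 2) := by
    rw [div_le_div_iff₀ d1 d2]
    linarith [base]
  have hKge : 2 * (1 + |θ| ^ 2) ≤ 2 + 4 * |θ| + 2 * |θ| ^ 2 + 4 * |θ| ^ 3 := by
    nlinarith [abs_nonneg θ, pow_nonneg (abs_nonneg θ) 3]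
  -- first term
  have t1 : δ / (1 + s1 ^ 2) ≤
      (2 + 4 * |θ| + 2 * |θ| ^ 2 + 4 * |θ| ^ 3) * (δ / (1 + s2 ^ 2)) := by
    rw [← mul_div_assoc, div_le_div_iff₀ d1 d2]
    nlinarith [mul_le_mul_of_nonneg_left base hδ.le,
      mul_le_mul_of_nonneg_right hKge (mul_nonneg hδ.le d1.le)]
  -- second term
  have t2 : R * ε * s1 / ((1 + ε * s1) * (1 + s1 ^ 2)) ≤
      (2 + 4 * |θ| + 2 * |θ| ^ 2 + 4 * |θ| ^ 3) *
        (R * ε * s2 / ((1 + ε * s2) * (1 + s2 ^ 2))) := by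
    have key : R * (ε * s1 / (1 + ε * s1) * (1 / (1 + s1 ^ 2))) ≤
        R * ((1 + 2 * |θ|) * (ε * s2 / (1 + ε * s2)) * (2 * (1 + |θ| ^ 2) / (1 + s2 ^ 2))) := by
      refine mul_le_mul_of_nonneg_left ?_ hR.le
      refine mul_le_mul h1 h2 (by positivity) (by positivity)
    calc R * ε * s1 / ((1 + ε * s1) * (1 + s1 ^ 2))
        = R * (ε * s1 / (1 + ε * s1) * (1 / (1 + s1 ^ 2))) := by
          field_simp
      _ ≤ R * ((1 + 2 * |θ|) * (ε * s2 / (1 + ε * s2)) * (2 * (1 + |θ| ^ 2) / (1 + s2 ^ 2))) :=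
          key
      _ = (2 + 4 * |θ| + 2 * |θ| ^ 2 + 4 * |θ| ^ 3) *
            (R * ε * s2 / ((1 + ε * s2) * (1 + s2 ^ 2))) := by
          have habs3 : |θ| ^ 3 = |θ| * θ ^ 2 := by rw [← _root_.sq_abs θ]; ring
          field_simp
          rw [habs3]
          linear_combination (4:ℝ) * habs3
  have goal : δ / (1 + s1 ^ 2) + R * ε * s1 / ((1 + ε * s1) * (1 + s1 ^ 2)) ≤
      (2 + 4 * |θ| + 2 * |θ| ^ 2 + 4 * |θ| ^ 3) *
        (δ / (1 + s2 ^ 2) + R * ε * s2 / ((1 + ε * s2) * (1 + s2 ^ 2))) := by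
    linarith [add_le_add t1 t2]
  simpa [Yprof, hs1def, hs2def] using goal

theorem stmt18 (a : ℝ) (ha : 1 / 2 ≤ a) (F : SchwartzMap ℝ ℝ) :
    ∃ C : ℝ, 0 < C ∧ ∀ δ R ε : ℝ, 0 < δ → 0 < R → 0 < ε → ε ≤ 1 / a →
      ∀ ω : ℝ,
        (∫ θ : ℝ, Yprof R ε δ (a + (ω - θ) * Complex.I) * |F θ|) ≤
          C * Yprof R ε δ (a + ω * Complex.I) := by
  have hg : Integrable (fun θ : ℝ => (2 + 4 * |θ| + 2 * |θ| ^ 2 + 4 * |θ| ^ 3) * |F θ|) := by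
    have h0 := F.integrable_pow_mul (volume) 0
    have h1 := F.integrable_pow_mul (volume) 1
    have h2 := F.integrable_pow_mul (volume) 2
    have h3 := F.integrable_pow_mul (volume) 3
    have heq : (fun θ : ℝ => (2 + 4 * |θ| + 2 * |θ| ^ 2 + 4 * |θ| ^ 3) * |F θ|) =
        (fun θ : ℝ => 2 * (‖θ‖ ^ 0 * ‖F θ‖) + 4 * (‖θ‖ ^ 1 * ‖F θ‖) +
          (2 * (‖θ‖ ^ 2 * ‖F θ‖) + 4 * (‖θ‖ ^ 3 * ‖F θ‖))) := by
      funext θ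
      simp only [Real.norm_eq_abs]
      ring
    rw [heq]
    exact ((h0.const_mul 2).add (h1.const_mul 4)).add
      ((h2.const_mul 2).add (h3.const_mul 4))
  set M := ∫ θ : ℝ, (2 + 4 * |θ| + 2 * |θ| ^ 2 + 4 * |θ| ^ 3) * |F θ| with hM
  have hMnn : 0 ≤ M := integral_nonneg (fun θ => by positivity)
  refine ⟨M + 1, by linarith, ?_⟩
  intro δ R ε hδ hR hε hεa ω
  have hY2 : 0 ≤ Yprof R ε δ (a + ω * Complex.I) := Yprof_nonneg hδ.le hR.le hε.le _
  have hpt : ∀ θ : ℝ, Yprof R ε δ (a + (ω - θ) * Complex.I) * |F θ| ≤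
      ((2 + 4 * |θ| + 2 * |θ| ^ 2 + 4 * |θ| ^ 3) * |F θ|) * Yprof R ε δ (a + ω * Complex.I) := by
    intro θ
    have := mul_le_mul_of_nonneg_right (Yprof_key a ha hδ hR hε ω θ) (abs_nonneg (F θ))
    calc Yprof R ε δ (a + (ω - θ) * Complex.I) * |F θ|
        ≤ (2 + 4 * |θ| + 2 * |θ| ^ 2 + 4 * |θ| ^ 3) * Yprof R ε δ (a + ω * Complex.I) * |F θ| :=
          this
      _ = ((2 + 4 * |θ| + 2 * |θ| ^ 2 + 4 * |θ| ^ 3) * |F θ|) *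
            Yprof R ε δ (a + ω * Complex.I) := by ring
  calc (∫ θ : ℝ, Yprof R ε δ (a + (ω - θ) * Complex.I) * |F θ|)
      ≤ ∫ θ : ℝ, ((2 + 4 * |θ| + 2 * |θ| ^ 2 + 4 * |θ| ^ 3) * |F θ|) *
          Yprof R ε δ (a + ω * Complex.I) := by
        refine integral_mono_of_nonneg (ae_of_all _ fun θ => ?_) (hg.mul_const _)
          (ae_of_all _ hpt)
        exact mul_nonneg (Yprof_nonneg hδ.le hR.le hε.le _) (abs_nonneg _)
    _ = M * Yprof R ε δ (a + ω * Complex.I) := integral_mul_const _ _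
    _ ≤ (M + 1) * Yprof R ε δ (a + ω * Complex.I) := by nlinarith [hY2]
end
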